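/- Let u : ℝ² → ℝ² be C², globally Lipschitz, with divergence ∇·u, and let x̄ : ℝ → ℝ² solve x̄′(p) = u(x̄(p)) with u(x̄(p)) ≠ 0 for every p. Fix p^u < p^d, set a = x̄(p^u), b = x̄(p^d), and suppose there is δ > 0 such that w(x,t) = 0 for all t whenever |x − x̄(p)| < δ for some p ≤ p^u or some p ≥ p^d. For fixed p ∈ (p^u, p^d) and t ∈ ℝ, define the gate flux φ_ε(p,t) := ⟨x_ε^u(p,t) − x_ε^d(p,t), n̂(p)⟩ · ∫_0^1 ⟨u(γ_ε(s)) + ε w(γ_ε(s), t), û(p)⟩ ds, where γ_ε(s) = x_ε^d(p,t) + s(x_ε^u(p,t) − x_ε^d(p,t)) and û(p) = u(x̄(p))/|u(x̄(p))|. Then there exist C > 0 and ε₀ > 0 such that for all t ∈ ℝ and all ε ∈ (0, ε₀], |φ_ε(p,t) − M_ε(p,t)| ≤ C ε², where M_ε(p,t) := ε ∫_{p^u}^{p^d} exp(∫_τ^p (∇·u)(x̄(ξ)) dξ) ⟨J u(x̄(τ)), w(x̄(τ), τ + t − p)⟩ dτ. -/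

import Mathlib

open scoped InnerProductSpace NNReal

noncomputable section

/-- The plane with its Euclidean inner product. -/
abbrev E2 : Type := EuclideanSpace ℝ (Fin 2)

/-- Rotation by +π/2 : J(x₁,x₂) = (−x₂, x₁). -/
noncomputable def Jrot : E2 → E2 :=
  fun x => (WithLp.equiv 2 (Fin 2 → ℝ)).symm ![-(x 1), x 0]

/-- Divergence of a planar vector field, as the trace of its Fréchet derivative. -/
noncomputable def div2 (u : E2 → E2) (x : E2) : ℝ :=
  LinearMap.trace ℝ E2 (fderiv ℝ u x).toLinearMap

/-- The leading-order instantaneous flux (Melnikov) function across the gate at `x̄(p)`. -/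
noncomputable def Mflux (u : E2 → E2) (xbar : ℝ → E2) (w : E2 → ℝ → E2)
    (pu pd ε p t : ℝ) : ℝ :=
  ε * ∫ τ in pu..pd,
    Real.exp (∫ ξ in τ..p, div2 u (xbar ξ)) *
      ⟪Jrot (u (xbar τ)), w (xbar τ) (τ + t - p)⟫_ℝ

/-- The gate flux across the straight segment from the downstream point `xd` to the
upstream point `xu`: the signed gate length in the direction `n̂(p)` times the average,
along the segment, of the component of the full velocity field in the direction `û(p)`. -/
noncomputable def gateFlux (u : E2 → E2) (w : E2 → ℝ → E2) (xbar : ℝ → E2)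
    (ε p t : ℝ) (xu xd : E2) : ℝ :=
  ⟪xu - xd, (‖u (xbar p)‖)⁻¹ • Jrot (u (xbar p))⟫_ℝ *
    ∫ s in (0:ℝ)..1,
      ⟪u (xd + s • (xu - xd)) + ε • w (xd + s • (xu - xd)) t,
        (‖u (xbar p)‖)⁻¹ • u (xbar p)⟫_ℝ


/-! Anchored at `a` (resp. `b`), the upstream (resp. downstream) agitated trajectory stays
`O(ε)`-close to the streakline by Grönwall. Along it, the normal displacement
`h(q) = ⟪J u(x̄ q), x(q) - x̄ q⟫` obeys `h' = (∇·u) h + ε ⟪J u, w⟫ + O(ε²)`: the Jacobian terms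
collapse to the divergence by the planar identity `⟪J(Av), y⟫ + ⟪Jv, Ay⟫ = tr A ⟪Jv, y⟫`, and the
remainder is a Taylor remainder of `u` plus `ε` times a Lipschitz increment of `w`. Integrating
with the factor `exp ∫_q^p ∇·u` from `pu` (resp. `pd`) to `p` yields the two halves of `M_ε` up
to `O(ε²)`. Finally the gate has length `O(ε)` and the velocity along it is `u(x̄ p) + O(ε)`,
so `φ_ε` differs from `⟪J u(x̄ p), x^u - x^d⟫` by `O(ε²)`. -/

lemma inner_E2 (x y : E2) : ⟪x, y⟫_ℝ = x 0 * y 0 + x 1 * y 1 := by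
  simp [PiLp.inner_apply, Fin.sum_univ_two, mul_comm]

lemma Jrot_apply_zero (x : E2) : Jrot x 0 = -x 1 := rfl

lemma Jrot_apply_one (x : E2) : Jrot x 1 = x 0 := rfl

def JrotCLM : E2 →L[ℝ] E2 :=
  LinearMap.toContinuousLinearMap
    { toFun := Jrot
      map_add' := fun x y => by ext i; fin_cases i <;> simp [Jrot_apply_zero, Jrot_apply_one]; ring
      map_smul' := fun c x => by ext i; fin_cases i <;> simp [Jrot_apply_zero, Jrot_apply_one] }

lemma norm_Jrot (x : E2) : ‖Jrot x‖ = ‖x‖ := by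
  simp only [EuclideanSpace.norm_eq, Fin.sum_univ_two, Jrot_apply_zero, Jrot_apply_one,
    Real.norm_eq_abs, sq_abs, neg_sq, add_comm]

/-- `⟪J v, y⟫` is the determinant of `(v, y)`, and the derivative of a determinant along a
linear flow `A` is `tr A` times the determinant. -/
lemma inner_Jrot_map_add_inner_Jrot_map (A : E2 →ₗ[ℝ] E2) (v y : E2) :
    ⟪Jrot (A v), y⟫_ℝ + ⟪Jrot v, A y⟫_ℝ = LinearMap.trace ℝ E2 A * ⟪Jrot v, y⟫_ℝ := by
  have hA : ∀ x : E2, ∀ i, A x i = x 0 * A (EuclideanSpace.single 0 1) i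
      + x 1 * A (EuclideanSpace.single 1 1) i := by
    intro x i
    conv_lhs => rw [← (EuclideanSpace.basisFun (Fin 2) ℝ).toBasis.sum_repr x]
    simp [Fin.sum_univ_two]
  rw [LinearMap.trace_eq_matrix_trace ℝ (EuclideanSpace.basisFun (Fin 2) ℝ).toBasis]
  simp only [Matrix.trace, Fin.sum_univ_two, Matrix.diag, LinearMap.toMatrix_apply,
    OrthonormalBasis.coe_toBasis, OrthonormalBasis.coe_toBasis_repr_apply,
    EuclideanSpace.basisFun_apply, EuclideanSpace.basisFun_repr, inner_E2, Jrot_apply_zero,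
    Jrot_apply_one, hA v, hA y]
  ring

lemma continuous_div2 {u : E2 → E2} (hu : ContDiff ℝ 1 u) : Continuous (div2 u) :=
  (LinearMap.continuous_of_finiteDimensional
    (LinearMap.trace ℝ E2 ∘ₗ ContinuousLinearMap.coeLM ℝ)).comp
    (hu.continuous_fderiv one_ne_zero)

lemma gronwallBound_zero_le {K η x : ℝ} (hK : 0 ≤ K) (hη : 0 ≤ η) :
    gronwallBound 0 K η x ≤ η * (x * Real.exp (K * x)) := by
  rcases hK.eq_or_lt with rfl | hK
  · simp [gronwallBound_K0]
  · simp only [gronwallBound_of_K_ne_0 hK.ne', zero_mul, zero_add]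
    rw [div_mul_eq_mul_div, div_le_iff₀ hK]
    have h : (1 - K * x) * Real.exp (K * x) ≤ 1 :=
      calc _ ≤ Real.exp (-(K * x)) * Real.exp (K * x) := by
            gcongr; linarith [Real.add_one_le_exp (-(K * x))]
        _ = 1 := by rw [← Real.exp_add, neg_add_cancel, Real.exp_zero]
    nlinarith

section Gronwall

variable {F : Type*} [NormedAddCommGroup F] [NormedSpace ℝ F] {v : F → F} {K : ℝ≥0}
  {f f' g : ℝ → F} {η a : ℝ}

lemma norm_sub_le_of_approx_trajectory_of_le (hv : LipschitzWith K v)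
    (hf : ∀ s, HasDerivAt f (f' s) s) (hf' : ∀ s, ‖f' s - v (f s)‖ ≤ η)
    (hg : ∀ s, HasDerivAt g (v (g s)) s) (ha : f a = g a) {s : ℝ} (hs : a ≤ s) :
    ‖f s - g s‖ ≤ η * ((s - a) * Real.exp (K * (s - a))) := by
  have h := dist_le_of_approx_trajectories_ODE (v := fun _ => v) (εg := 0) (δ := 0)
    (fun _ => hv) (fun s _ => (hf s).continuousAt.continuousWithinAt)
    (fun s _ => (hf s).hasDerivWithinAt) (fun s _ => (dist_eq_norm _ _).trans_le (hf' s))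
    (fun s _ => (hg s).continuousAt.continuousWithinAt)
    (fun s _ => (hg s).hasDerivWithinAt) (fun s _ => by simp) (by simp [ha]) s ⟨hs, le_rfl⟩
  rw [add_zero, dist_eq_norm] at h
  exact h.trans (gronwallBound_zero_le K.coe_nonneg ((norm_nonneg _).trans (hf' a)))

lemma norm_sub_le_of_approx_trajectory (hv : LipschitzWith K v)
    (hf : ∀ s, HasDerivAt f (f' s) s) (hf' : ∀ s, ‖f' s - v (f s)‖ ≤ η)
    (hg : ∀ s, HasDerivAt g (v (g s)) s) (ha : f a = g a) (s : ℝ) :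
    ‖f s - g s‖ ≤ η * (|s - a| * Real.exp (K * |s - a|)) := by
  rcases le_total a s with hs | hs
  · rw [abs_of_nonneg (sub_nonneg.2 hs)]
    exact norm_sub_le_of_approx_trajectory_of_le hv hf hf' hg ha hs
  · have hrev := norm_sub_le_of_approx_trajectory_of_le (v := fun x => -v x) (f := fun r => f (-r))
      (f' := fun r => -f' (-r)) (g := fun r => g (-r)) (a := -a) (s := -s) hv.neg
      (fun r => by simpa [Function.comp_def] using (hf (-r)).scomp r (hasDerivAt_neg r))
      (fun r => by simpa [← sub_eq_neg_add, norm_sub_rev] using hf' (-r))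
      (fun r => by simpa [Function.comp_def] using (hg (-r)).scomp r (hasDerivAt_neg r))
      (by simpa using ha) (neg_le_neg hs)
    rw [abs_of_nonpos (sub_nonpos.2 hs), neg_sub]
    simpa [sub_eq_add_neg, add_comm] using hrev

end Gronwall

lemma norm_sub_left_le_of_mem_segment {F : Type*} [NormedAddCommGroup F] [NormedSpace ℝ F]
    {x y z : F} (hz : z ∈ segment ℝ y x) : ‖z - y‖ ≤ ‖x - y‖ := by
  rw [← dist_eq_norm, ← dist_eq_norm, dist_comm z, dist_comm x]
  linarith [dist_add_dist_of_mem_segment hz, dist_nonneg (x := z) (y := x)]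

lemma exists_norm_sub_sub_fderiv_le_of_isCompact {F G : Type*} [NormedAddCommGroup F]
    [NormedSpace ℝ F] [ProperSpace F] [NormedAddCommGroup G] [NormedSpace ℝ G] {f : F → G}
    (hf : ContDiff ℝ 2 f) {k : Set F} (hk : IsCompact k) :
    ∃ L ≥ 0, ∀ y ∈ k, ∀ x, ‖x - y‖ ≤ 1 →
      ‖f x - f y - fderiv ℝ f y (x - y)‖ ≤ L * ‖x - y‖ ^ 2 := by
  have hDf : ContDiff ℝ 1 (fderiv ℝ f) := hf.fderiv_right (by norm_num)
  obtain ⟨L, hL⟩ := (hk.cthickening (r := 1)).exists_bound_of_continuousOn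
    (hDf.continuous_fderiv one_ne_zero).continuousOn
  refine ⟨max L 0, le_max_right _ _, fun y hy x hx => ?_⟩
  have hball : Metric.closedBall y 1 ⊆ Metric.cthickening 1 k :=
    Metric.closedBall_subset_cthickening hy 1
  have hlip : ∀ z ∈ segment ℝ y x, ‖fderiv ℝ f z - fderiv ℝ f y‖ ≤ max L 0 * ‖x - y‖ := by
    intro z hz
    have hx' : x ∈ Metric.closedBall y 1 := by rwa [Metric.mem_closedBall, dist_eq_norm]
    have hzB := (convex_closedBall y 1).segment_subset
      (Metric.mem_closedBall_self zero_le_one) hx' hz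
    refine ((convex_closedBall y 1).norm_image_sub_le_of_norm_fderiv_le
      (fun z _ => hDf.differentiable one_ne_zero z)
      (fun z hz => (hL z (hball hz)).trans (le_max_left L 0))
      (Metric.mem_closedBall_self zero_le_one) hzB).trans ?_
    exact mul_le_mul_of_nonneg_left (norm_sub_left_le_of_mem_segment hz) (le_max_right _ _)
  calc ‖f x - f y - fderiv ℝ f y (x - y)‖ ≤ max L 0 * ‖x - y‖ * ‖x - y‖ :=
        (convex_segment y x).norm_image_sub_le_of_norm_fderiv_le'
          (fun z _ => hf.differentiable (by norm_num) z) hlip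
          (left_mem_segment ℝ y x) (right_mem_segment ℝ y x)
    _ = max L 0 * ‖x - y‖ ^ 2 := by ring

def melnikovIntegrand (u : E2 → E2) (xbar : ℝ → E2) (w : E2 → ℝ → E2) (p σ τ : ℝ) : ℝ :=
  Real.exp (∫ ξ in τ..p, div2 u (xbar ξ)) * ⟪Jrot (u (xbar τ)), w (xbar τ) (τ + σ)⟫_ℝ

lemma Mflux_eq_integral_melnikovIntegrand (u : E2 → E2) (xbar : ℝ → E2) (w : E2 → ℝ → E2)
    (pu pd ε p t : ℝ) :
    Mflux u xbar w pu pd ε p t = ε * ∫ τ in pu..pd, melnikovIntegrand u xbar w p (t - p) τ := by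
  simp only [Mflux, melnikovIntegrand, add_sub_assoc]

def linearizationRemainder (u : E2 → E2) (w : E2 → ℝ → E2) (ε s : ℝ) (y z : E2) : E2 :=
  (u z - u y - fderiv ℝ u y (z - y)) + ε • (w z s - w y s)

section Melnikov

variable {u : E2 → E2} {xbar : ℝ → E2} {w : E2 → ℝ → E2}

lemma hasDerivAt_integral_div2_left (hu : ContDiff ℝ 1 u) (hxbar : Continuous xbar) (p q : ℝ) :
    HasDerivAt (fun q => ∫ ξ in q..p, div2 u (xbar ξ)) (-div2 u (xbar q)) q :=
  have hc := (continuous_div2 hu).comp hxbar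
  intervalIntegral.integral_hasDerivAt_left (hc.intervalIntegrable _ _)
    (hc.stronglyMeasurableAtFilter _ _) hc.continuousAt

lemma continuous_integral_div2_left (hu : ContDiff ℝ 1 u) (hxbar : Continuous xbar) (p : ℝ) :
    Continuous fun q => ∫ ξ in q..p, div2 u (xbar ξ) :=
  continuous_iff_continuousAt.2 fun q => (hasDerivAt_integral_div2_left hu hxbar p q).continuousAt

lemma continuous_melnikovIntegrand (hu : ContDiff ℝ 1 u) (hxbar : Continuous xbar)
    (hw : Continuous (Function.uncurry w)) (p σ : ℝ) :
    Continuous (melnikovIntegrand u xbar w p σ) :=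
  (Real.continuous_exp.comp (continuous_integral_div2_left hu hxbar p)).mul
    ((JrotCLM.continuous.comp (hu.continuous.comp hxbar)).inner
      (hw.comp (hxbar.prodMk (continuous_id.add continuous_const))))

lemma hasDerivAt_melnikov_defect (hu : ContDiff ℝ 1 u)
    (hxbar : ∀ q, HasDerivAt xbar (u (xbar q)) q) (hw : Continuous (Function.uncurry w))
    {Z : ℝ → E2} {ε : ℝ} (hZ : ∀ s, HasDerivAt Z (u (Z s) + ε • w (Z s) s) s)
    (σ p q₀ q : ℝ) :
    HasDerivAt
      (fun q => Real.exp (∫ ξ in q..p, div2 u (xbar ξ)) *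
          ⟪Jrot (u (xbar q)), Z (q + σ) - xbar q⟫_ℝ
        - ε * ∫ τ in q₀..q, melnikovIntegrand u xbar w p σ τ)
      (Real.exp (∫ ξ in q..p, div2 u (xbar ξ)) *
        ⟪Jrot (u (xbar q)), linearizationRemainder u w ε (q + σ) (xbar q) (Z (q + σ))⟫_ℝ) q := by
  have hxc : Continuous xbar := continuous_iff_continuousAt.2 fun q => (hxbar q).continuousAt
  have hexp := (hasDerivAt_integral_div2_left hu hxc p q).exp
  have hJ : HasDerivAt (fun q => Jrot (u (xbar q))) (Jrot (fderiv ℝ u (xbar q) (u (xbar q)))) q :=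
    JrotCLM.hasFDerivAt.comp_hasDerivAt q
      (((hu.differentiable one_ne_zero (xbar q)).hasFDerivAt).comp_hasDerivAt q (hxbar q))
  have hm := continuous_melnikovIntegrand hu hxc hw p σ
  have hW : HasDerivAt (fun q => ∫ τ in q₀..q, melnikovIntegrand u xbar w p σ τ)
      (melnikovIntegrand u xbar w p σ q) q :=
    intervalIntegral.integral_hasDerivAt_right (hm.intervalIntegrable _ _)
      (hm.stronglyMeasurableAtFilter _ _) hm.continuousAt
  have hZσ := (hZ (q + σ)).comp_add_const q σ
  refine ((hexp.mul (hJ.inner ℝ (hZσ.sub (hxbar q)))).sub (hW.const_mul ε)).congr_deriv ?_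
  have htrace : ⟪Jrot (fderiv ℝ u (xbar q) (u (xbar q))), Z (q + σ) - xbar q⟫_ℝ
      + ⟪Jrot (u (xbar q)), fderiv ℝ u (xbar q) (Z (q + σ) - xbar q)⟫_ℝ
      = div2 u (xbar q) * ⟪Jrot (u (xbar q)), Z (q + σ) - xbar q⟫_ℝ :=
    inner_Jrot_map_add_inner_Jrot_map _ _ _
  simp only [melnikovIntegrand, linearizationRemainder, Pi.sub_apply, inner_add_right,
    inner_sub_right, real_inner_smul_right] at htrace ⊢
  linear_combination Real.exp (∫ ξ in q..p, div2 u (xbar ξ)) * htrace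

lemma abs_inner_sub_melnikov_le (hu : ContDiff ℝ 1 u)
    (hxbar : ∀ q, HasDerivAt xbar (u (xbar q)) q) (hw : Continuous (Function.uncurry w))
    {Z : ℝ → E2} {ε : ℝ} (hZ : ∀ s, HasDerivAt Z (u (Z s) + ε • w (Z s) s) s)
    {σ p q₀ B r : ℝ} (hZ₀ : Z (q₀ + σ) = xbar q₀)
    (hB : ∀ q ∈ Set.uIcc q₀ p, Real.exp (∫ ξ in q..p, div2 u (xbar ξ)) * ‖u (xbar q)‖ ≤ B)
    (hr : ∀ q ∈ Set.uIcc q₀ p,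
      ‖linearizationRemainder u w ε (q + σ) (xbar q) (Z (q + σ))‖ ≤ r) :
    |⟪Jrot (u (xbar p)), Z (p + σ) - xbar p⟫_ℝ
      - ε * ∫ τ in q₀..p, melnikovIntegrand u xbar w p σ τ| ≤ B * r * |p - q₀| := by
  have hderiv_le : ∀ q ∈ Set.uIcc q₀ p,
      ‖Real.exp (∫ ξ in q..p, div2 u (xbar ξ)) *
        ⟪Jrot (u (xbar q)), linearizationRemainder u w ε (q + σ) (xbar q) (Z (q + σ))⟫_ℝ‖
        ≤ B * r := by
    intro q hq
    rw [norm_mul, Real.norm_of_nonneg (Real.exp_pos _).le]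
    calc _ ≤ Real.exp (∫ ξ in q..p, div2 u (xbar ξ)) * ‖u (xbar q)‖ *
          ‖linearizationRemainder u w ε (q + σ) (xbar q) (Z (q + σ))‖ := by
          rw [mul_assoc, ← norm_Jrot]
          gcongr
          exact norm_inner_le_norm _ _
      _ ≤ B * r := mul_le_mul (hB q hq) (hr q hq) (norm_nonneg _)
          ((mul_nonneg (Real.exp_pos _).le (norm_nonneg _)).trans (hB q hq))
  have hmvt := (convex_uIcc q₀ p).norm_image_sub_le_of_norm_hasDerivWithin_le
    (fun q _ => (hasDerivAt_melnikov_defect hu hxbar hw hZ σ p q₀ q).hasDerivWithinAt) hderiv_le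
    Set.left_mem_uIcc Set.right_mem_uIcc
  simpa [hZ₀, Real.norm_eq_abs] using hmvt

lemma norm_linearizationRemainder_le {L ε ρ s : ℝ} {Kw : ℝ≥0} {y z : E2} (hL : 0 ≤ L)
    (hε : 0 ≤ ε) (hu : ‖u z - u y - fderiv ℝ u y (z - y)‖ ≤ L * ‖z - y‖ ^ 2)
    (hw : LipschitzWith Kw (fun x => w x s)) (hzy : ‖z - y‖ ≤ ρ) :
    ‖linearizationRemainder u w ε s y z‖ ≤ L * ρ ^ 2 + ε * (Kw * ρ) := by
  refine (norm_add_le _ _).trans (add_le_add (hu.trans ?_) ?_)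
  · gcongr
  · rw [norm_smul, Real.norm_of_nonneg hε]
    gcongr
    calc ‖w z s - w y s‖ = dist (w z s) (w y s) := (dist_eq_norm _ _).symm
      _ ≤ Kw * dist z y := hw.dist_le_mul z y
      _ ≤ Kw * ρ := by rw [dist_eq_norm]; gcongr

lemma exists_bound_exp_integral_div2_mul_norm (hu : ContDiff ℝ 1 u) (hxbar : Continuous xbar)
    (a b p : ℝ) :
    ∃ B, ∀ q ∈ Set.Icc a b, ‖Real.exp (∫ ξ in q..p, div2 u (xbar ξ)) * ‖u (xbar q)‖‖ ≤ B :=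
  isCompact_Icc.exists_bound_of_continuousOn <| Continuous.continuousOn <| by
    have := continuous_integral_div2_left hu hxbar p
    fun_prop

lemma norm_agitated_sub_streakline_le {K : ℝ≥0} {Cw ε σ a b q₀ q : ℝ}
    (hu : LipschitzWith K u) (hxbar : ∀ q, HasDerivAt xbar (u (xbar q)) q)
    (hwbdd : ∀ x s, ‖w x s‖ ≤ Cw) (hε : 0 ≤ ε) {Z : ℝ → E2}
    (hZ : ∀ s, HasDerivAt Z (u (Z s) + ε • w (Z s) s) s) (hZ₀ : Z (q₀ + σ) = xbar q₀)
    (hq₀ : q₀ ∈ Set.Icc a b) (hq : q ∈ Set.Icc a b) :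
    ‖Z (q + σ) - xbar q‖ ≤ ε * (Cw * ((b - a) * Real.exp (K * (b - a)))) := by
  have hCw : 0 ≤ Cw := (norm_nonneg _).trans (hwbdd 0 0)
  have hagit : ∀ s, ‖u (Z (s + σ)) + ε • w (Z (s + σ)) (s + σ) - u (Z (s + σ))‖ ≤ ε * Cw :=
    fun s => by
      rw [add_sub_cancel_left, norm_smul, Real.norm_of_nonneg hε]
      exact mul_le_mul_of_nonneg_left (hwbdd _ _) hε
  have hdist : |q - q₀| ≤ b - a := abs_sub_le_iff.2
    ⟨by linarith [hq.2, hq₀.1], by linarith [hq.1, hq₀.2]⟩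
  refine (norm_sub_le_of_approx_trajectory hu (fun s => (hZ (s + σ)).comp_add_const s σ) hagit
    hxbar hZ₀ q).trans ?_
  have hab : 0 ≤ b - a := (abs_nonneg _).trans hdist
  rw [mul_assoc]
  gcongr

lemma abs_inner_sub_melnikov_le_of_mem_Icc {Kw : ℝ≥0} (hu : ContDiff ℝ 1 u)
    (hxbar : ∀ q, HasDerivAt xbar (u (xbar q)) q) (hw : Continuous (Function.uncurry w))
    (hwLip : ∀ s, LipschitzWith Kw fun x => w x s) {a b L B ε ρ σ p q₀ : ℝ} (hL : 0 ≤ L)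
    (hTaylor : ∀ y ∈ xbar '' Set.Icc a b, ∀ x, ‖x - y‖ ≤ 1 →
      ‖u x - u y - fderiv ℝ u y (x - y)‖ ≤ L * ‖x - y‖ ^ 2)
    (hB : ∀ q ∈ Set.Icc a b, ‖Real.exp (∫ ξ in q..p, div2 u (xbar ξ)) * ‖u (xbar q)‖‖ ≤ B)
    (hε : 0 ≤ ε) (hρ : ρ ≤ 1) {Z : ℝ → E2} (hZ : ∀ s, HasDerivAt Z (u (Z s) + ε • w (Z s) s) s)
    (hclose : ∀ q ∈ Set.Icc a b, ‖Z (q + σ) - xbar q‖ ≤ ρ) (hp : p ∈ Set.Icc a b)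
    (hq₀ : q₀ ∈ Set.Icc a b) (hZ₀ : Z (q₀ + σ) = xbar q₀) :
    |⟪Jrot (u (xbar p)), Z (p + σ) - xbar p⟫_ℝ
      - ε * ∫ τ in q₀..p, melnikovIntegrand u xbar w p σ τ|
      ≤ B * (L * ρ ^ 2 + ε * (Kw * ρ)) * (b - a) := by
  have hsub : Set.uIcc q₀ p ⊆ Set.Icc a b := Set.uIcc_subset_Icc hq₀ hp
  refine (abs_inner_sub_melnikov_le hu hxbar hw hZ hZ₀
    (fun q hq => (Real.le_norm_self _).trans (hB q (hsub hq))) (fun q hq =>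
      norm_linearizationRemainder_le hL hε
        (hTaylor _ ⟨q, hsub hq, rfl⟩ _ ((hclose q (hsub hq)).trans hρ)) (hwLip _)
        (hclose q (hsub hq)))).trans ?_
  have hB₀ : 0 ≤ B := (norm_nonneg _).trans (hB p hp)
  have hρ₀ : 0 ≤ ρ := (norm_nonneg _).trans (hclose p hp)
  gcongr
  exact abs_sub_le_iff.2 ⟨by linarith [hp.2, hq₀.1], by linarith [hp.1, hq₀.2]⟩

end Melnikov

lemma gateFlux_eq (u : E2 → E2) (w : E2 → ℝ → E2) (xbar : ℝ → E2) (ε p t : ℝ) (xu xd : E2) :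
    gateFlux u w xbar ε p t xu xd = ‖u (xbar p)‖⁻¹ ^ 2 * ⟪Jrot (u (xbar p)), xu - xd⟫_ℝ *
      ∫ s in (0 : ℝ)..1, ⟪u (xd + s • (xu - xd)) + ε • w (xd + s • (xu - xd)) t, u (xbar p)⟫_ℝ := by
  simp only [gateFlux, real_inner_smul_right, intervalIntegral.integral_const_mul,
    real_inner_comm (Jrot _)]
  ring

section Gate

variable {u : E2 → E2} {w : E2 → ℝ → E2} {K : ℝ≥0} {Cw ε ρ t : ℝ} {y xu xd : E2}

lemma abs_integral_inner_segment_sub_norm_sq_le (hu : LipschitzWith K u)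
    (hw : Continuous fun x => w x t) (hwbdd : ∀ x, ‖w x t‖ ≤ Cw) (hε : 0 ≤ ε)
    (hxu : ‖xu - y‖ ≤ ρ) (hxd : ‖xd - y‖ ≤ ρ) :
    |(∫ s in (0 : ℝ)..1, ⟪u (xd + s • (xu - xd)) + ε • w (xd + s • (xu - xd)) t, u y⟫_ℝ)
      - ‖u y‖ ^ 2| ≤ (K * ρ + ε * Cw) * ‖u y‖ := by
  set γ : ℝ → E2 := fun s => xd + s • (xu - xd)
  have hγ : ∀ s ∈ Set.Icc (0 : ℝ) 1, dist (γ s) y ≤ ρ := by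
    intro s hs
    have hseg : γ s ∈ segment ℝ xd xu := by
      rw [segment_eq_image']
      exact ⟨s, hs, rfl⟩
    exact (convex_closedBall y ρ).segment_subset (by rwa [Metric.mem_closedBall, dist_eq_norm])
      (by rwa [Metric.mem_closedBall, dist_eq_norm]) hseg
  have hvel : ∀ s ∈ Set.uIoc (0 : ℝ) 1,
      ‖⟪u (γ s) + ε • w (γ s) t, u y⟫_ℝ - ⟪u y, u y⟫_ℝ‖ ≤ (K * ρ + ε * Cw) * ‖u y‖ := by
    intro s hs
    rw [Set.uIoc_of_le zero_le_one] at hs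
    rw [← inner_sub_left, Real.norm_eq_abs, add_sub_right_comm]
    refine (abs_real_inner_le_norm _ _).trans (mul_le_mul_of_nonneg_right ?_ (norm_nonneg _))
    refine (norm_add_le _ _).trans (add_le_add ?_ ?_)
    · rw [← dist_eq_norm]
      exact (hu.dist_le_mul _ _).trans (by gcongr; exact hγ s ⟨hs.1.le, hs.2⟩)
    · rw [norm_smul, Real.norm_of_nonneg hε]
      gcongr
      exact hwbdd _
  have hcont : Continuous fun s => ⟪u (γ s) + ε • w (γ s) t, u y⟫_ℝ := by
    have := hu.continuous
    fun_prop
  simpa [intervalIntegral.integral_sub (hcont.intervalIntegrable _ _) intervalIntegrable_const,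
    real_inner_self_eq_norm_sq] using intervalIntegral.norm_integral_le_of_norm_le_const hvel

lemma abs_gateFlux_sub_inner_le {xbar : ℝ → E2} {p : ℝ} (hu : LipschitzWith K u)
    (hw : Continuous fun x => w x t) (hwbdd : ∀ x, ‖w x t‖ ≤ Cw) (hu₀ : u (xbar p) ≠ 0)
    (hε : 0 ≤ ε) (hxu : ‖xu - xbar p‖ ≤ ρ) (hxd : ‖xd - xbar p‖ ≤ ρ) :
    |gateFlux u w xbar ε p t xu xd - ⟪Jrot (u (xbar p)), xu - xd⟫_ℝ|
      ≤ 2 * ρ * (K * ρ + ε * Cw) := by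
  have hI := abs_integral_inner_segment_sub_norm_sq_le hu hw hwbdd hε hxu hxd
  rw [gateFlux_eq]
  set u₀ := u (xbar p)
  have hn : 0 < ‖u₀‖ := norm_pos_iff.2 hu₀
  have hρ : 0 ≤ ρ := (norm_nonneg _).trans hxu
  have hgate : |⟪Jrot u₀, xu - xd⟫_ℝ| ≤ ‖u₀‖ * (2 * ρ) := by
    refine (abs_real_inner_le_norm _ _).trans ?_
    rw [norm_Jrot, ← sub_sub_sub_cancel_right xu xd (xbar p), two_mul]
    gcongr
    exact (norm_sub_le _ _).trans (add_le_add hxu hxd)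
  have hsplit : ∀ I : ℝ, ‖u₀‖⁻¹ ^ 2 * ⟪Jrot u₀, xu - xd⟫_ℝ * I - ⟪Jrot u₀, xu - xd⟫_ℝ
      = ‖u₀‖⁻¹ ^ 2 * ⟪Jrot u₀, xu - xd⟫_ℝ * (I - ‖u₀‖ ^ 2) := fun I => by
    field_simp
  rw [hsplit, abs_mul, abs_mul, abs_of_nonneg (by positivity)]
  calc _ ≤ ‖u₀‖⁻¹ ^ 2 * (‖u₀‖ * (2 * ρ)) * ((K * ρ + ε * Cw) * ‖u₀‖) := by gcongr
    _ = 2 * ρ * (K * ρ + ε * Cw) := by field_simp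

end Gate

lemma gateFlux_sub_Mflux_eq {u : E2 → E2} {xbar : ℝ → E2} {w : E2 → ℝ → E2} {pu pd ε p t : ℝ}
    (hm : Continuous (melnikovIntegrand u xbar w p (t - p))) (xu xd : E2) :
    gateFlux u w xbar ε p t xu xd - Mflux u xbar w pu pd ε p t
      = (gateFlux u w xbar ε p t xu xd - ⟪Jrot (u (xbar p)), xu - xd⟫_ℝ)
        + (⟪Jrot (u (xbar p)), xu - xbar p⟫_ℝ
          - ε * ∫ τ in pu..p, melnikovIntegrand u xbar w p (t - p) τ)
        - (⟪Jrot (u (xbar p)), xd - xbar p⟫_ℝ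
          - ε * ∫ τ in pd..p, melnikovIntegrand u xbar w p (t - p) τ) := by
  rw [Mflux_eq_integral_melnikovIntegrand, ← sub_sub_sub_cancel_right xu xd (xbar p),
    inner_sub_right, ← intervalIntegral.integral_add_adjacent_intervals
      (hm.intervalIntegrable pu p) (hm.intervalIntegrable p pd),
    intervalIntegral.integral_symm p pd]
  ring

theorem instantaneous_transport_general
    (u : E2 → E2) (hu : ContDiff ℝ 2 u)
    (K : ℝ≥0) (huLip : LipschitzWith K u)
    (xbar : ℝ → E2) (hxbar : ∀ p : ℝ, HasDerivAt xbar (u (xbar p)) p)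
    (hune : ∀ p : ℝ, u (xbar p) ≠ 0)
    (pu pd : ℝ)
    (w : E2 → ℝ → E2) (hw : ContDiff ℝ 1 (Function.uncurry w))
    (Cw : ℝ) (hwbdd : ∀ (x : E2) (t : ℝ), ‖w x t‖ ≤ Cw)
    (Kw : ℝ≥0) (hwLip : ∀ t : ℝ, LipschitzWith Kw (fun x => w x t))
    (p : ℝ) (hp : p ∈ Set.Ioo pu pd) :
    ∃ C > (0:ℝ), ∃ ε₀ > (0:ℝ),
      ∀ t : ℝ, ∀ ε ∈ Set.Ioc (0:ℝ) ε₀,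
        ∀ X Y : ℝ → E2,
          (∀ s : ℝ, HasDerivAt X (u (X s) + ε • w (X s) s) s) →
          X (t - p + pu) = xbar pu →
          (∀ s : ℝ, HasDerivAt Y (u (Y s) + ε • w (Y s) s) s) →
          Y (t - p + pd) = xbar pd →
          |gateFlux u w xbar ε p t (X t) (Y t)
            - Mflux u xbar w pu pd ε p t| ≤ C * ε ^ 2 := by
  have hpI : p ∈ Set.Icc pu pd := Set.Ioo_subset_Icc_self hp
  have hpu : pu ∈ Set.Icc pu pd := ⟨le_rfl, hpI.1.trans hpI.2⟩
  have hpd : pd ∈ Set.Icc pu pd := ⟨hpI.1.trans hpI.2, le_rfl⟩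
  have hxc : Continuous xbar := continuous_iff_continuousAt.2 fun q => (hxbar q).continuousAt
  have hu₁ : ContDiff ℝ 1 u := hu.of_le (by norm_num)
  obtain ⟨L, hL, hTaylor⟩ :=
    exists_norm_sub_sub_fderiv_le_of_isCompact hu ((isCompact_Icc (a := pu) (b := pd)).image hxc)
  obtain ⟨B, hB⟩ := exists_bound_exp_integral_div2_mul_norm hu₁ hxc pu pd p
  set c := Cw * ((pd - pu) * Real.exp (K * (pd - pu)))
  have hc : 0 ≤ c := mul_nonneg ((norm_nonneg _).trans (hwbdd 0 0))
    (mul_nonneg (by linarith [hpu.2]) (Real.exp_pos _).le)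
  set C₀ := 2 * c * (K * c + Cw) + 2 * (B * (L * c ^ 2 + Kw * c) * (pd - pu))
  refine ⟨|C₀| + 1, by positivity, 1 / (c + 1), by positivity,
    fun t ε ⟨hε, hεε₀⟩ X Y hX hXa hY hYb => ?_⟩
  have hεc : ε * c ≤ 1 := by
    rw [le_div_iff₀ (by positivity)] at hεε₀
    nlinarith
  rw [add_comm] at hXa hYb
  have hXclose : ∀ q ∈ Set.Icc pu pd, ‖X (q + (t - p)) - xbar q‖ ≤ ε * c := fun q =>
    norm_agitated_sub_streakline_le huLip hxbar hwbdd hε.le hX hXa hpu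
  have hYclose : ∀ q ∈ Set.Icc pu pd, ‖Y (q + (t - p)) - xbar q‖ ≤ ε * c := fun q =>
    norm_agitated_sub_streakline_le huLip hxbar hwbdd hε.le hY hYb hpd
  have hX' := abs_inner_sub_melnikov_le_of_mem_Icc hu₁ hxbar hw.continuous hwLip hL hTaylor hB
    hε.le hεc hX hXclose hpI hpu hXa
  have hY' := abs_inner_sub_melnikov_le_of_mem_Icc hu₁ hxbar hw.continuous hwLip hL hTaylor hB
    hε.le hεc hY hYclose hpI hpd hYb
  have hgate := abs_gateFlux_sub_inner_le huLip (hwLip t).continuous (fun x => hwbdd x t)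
    (hune p) hε.le (hXclose p hpI) (hYclose p hpI)
  simp only [add_sub_cancel] at hX' hY' hgate
  rw [gateFlux_sub_Mflux_eq (continuous_melnikovIntegrand hu₁ hxc hw.continuous p (t - p))]
  calc _ ≤ 2 * (ε * c) * (K * (ε * c) + ε * Cw) + B * (L * (ε * c) ^ 2 + ε * (Kw * (ε * c)))
        * (pd - pu) + B * (L * (ε * c) ^ 2 + ε * (Kw * (ε * c))) * (pd - pu) :=
        (abs_sub _ _).trans (add_le_add ((abs_add_le _ _).trans (add_le_add hgate hX')) hY')
    _ = C₀ * ε ^ 2 := by ring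
    _ ≤ (|C₀| + 1) * ε ^ 2 := by gcongr; linarith [le_abs_self C₀]

/-- **Instantaneous transport theorem.**  For a steady C² globally Lipschitz planar
field `u` with a nonvanishing streakline `x̄`, and a bounded C¹ agitation `w` vanishing
near the streakline upstream of `a = x̄(pu)` and downstream of `b = x̄(pd)`, the
instantaneous flux `φ_ε(p,t)` across the gate of the pseudo-streakline, drawn at
`x̄(p)` with `pu < p < pd`, equals the Melnikov function `M_ε(p,t)` up to an error of
order `ε²`, uniformly in `t`. -/
theorem instantaneous_transport
    (u : E2 → E2) (hu : ContDiff ℝ 2 u)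
    (K : ℝ≥0) (huLip : LipschitzWith K u)
    (xbar : ℝ → E2) (hxbar : ∀ p : ℝ, HasDerivAt xbar (u (xbar p)) p)
    (hune : ∀ p : ℝ, u (xbar p) ≠ 0)
    (pu pd : ℝ) (hpp : pu < pd)
    (w : E2 → ℝ → E2) (hw : ContDiff ℝ 1 (Function.uncurry w))
    (Cw : ℝ) (hwbdd : ∀ (x : E2) (t : ℝ), ‖w x t‖ ≤ Cw)
    (Kw : ℝ≥0) (hwLip : ∀ t : ℝ, LipschitzWith Kw (fun x => w x t))
    (δ : ℝ) (hδ : 0 < δ)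
    (hopen : ∀ (x : E2) (t : ℝ),
      (∃ p : ℝ, (p ≤ pu ∨ pd ≤ p) ∧ ‖x - xbar p‖ < δ) → w x t = 0)
    (p : ℝ) (hp : p ∈ Set.Ioo pu pd) :
    ∃ C > (0:ℝ), ∃ ε₀ > (0:ℝ),
      ∀ t : ℝ, ∀ ε ∈ Set.Ioc (0:ℝ) ε₀,
        ∀ X Y : ℝ → E2,
          (∀ s : ℝ, HasDerivAt X (u (X s) + ε • w (X s) s) s) →
          X (t - p + pu) = xbar pu →
          (∀ s : ℝ, HasDerivAt Y (u (Y s) + ε • w (Y s) s) s) →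
          Y (t - p + pd) = xbar pd →
          |gateFlux u w xbar ε p t (X t) (Y t)
            - Mflux u xbar w pu pd ε p t| ≤ C * ε ^ 2 :=
  instantaneous_transport_general u hu K huLip xbar hxbar hune pu pd w hw Cw hwbdd Kw hwLip p hp
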